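/- For any complex number z and positive real numbers a, b with ab = 1, sqrt(a)·(e^{−z²/8}/(2a) − e^{z²/8}·Σ_{n=1}^∞ e^{−πa²n²}·cos(sqrt(π)·a·n·z)) = sqrt(b)·(e^{z²/8}/(2b) − e^{−z²/8}·Σ_{n=1}^∞ e^{−πb²n²}·cosh(sqrt(π)·b·n·z)). -/

import Mathlib

/-!
Both series are `(θ(w, τ) - 1) / 2` for Jacobi's `θ(w, τ) = ∑_{n ∈ ℤ} e^{πin²τ + 2πinw}`: the
cosine series with `w = az/(2√π)`, `τ = ia²`, and, since `cosh x = cos (ix)`, the hyperbolic one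
with `(a, z)` replaced by `(b, iz)`. The modular transformation `τ ↦ -1/τ` sends `ia²` to `ib²`
(as `ab = 1`) and `az/(2√π)` to `-b(iz)/(2√π)`, with the factor
`(-iτ)^{-1/2} e^{-πiw²/τ} = b e^{-z²/4}`; the identity is this relation rearranged.
-/

open Real Complex

lemma jacobiTheta₂_term_add_term_neg (n : ℤ) (w τ : ℂ) :
    jacobiTheta₂_term n w τ + jacobiTheta₂_term (-n) w τ =
      2 * cexp (π * I * n ^ 2 * τ) * Complex.cos (2 * π * n * w) := by
  simp only [jacobiTheta₂_term, Complex.cos, Int.cast_neg, neg_sq, Complex.exp_add]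
  ring_nf

lemma hasSum_jacobiTheta₂_cos (w : ℂ) {τ : ℂ} (hτ : 0 < im τ) :
    HasSum (fun n : ℕ => cexp (π * I * ((n : ℂ) + 1) ^ 2 * τ) *
        Complex.cos (2 * π * ((n : ℂ) + 1) * w))
      ((jacobiTheta₂ w τ - 1) / 2) := by
  have h := (hasSum_jacobiTheta₂_term w hτ).nat_add_neg.div_const 2
  rw [← hasSum_nat_add_iff' 1] at h
  have h₀ : jacobiTheta₂_term 0 w τ = 1 := by simp [jacobiTheta₂_term]
  simp only [Finset.sum_range_one, Nat.cast_zero, neg_zero, h₀] at h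
  rw [show (jacobiTheta₂ w τ + 1) / 2 - (1 + 1) / 2 = (jacobiTheta₂ w τ - 1) / 2 by ring] at h
  refine h.congr_fun fun n => ?_
  rw [jacobiTheta₂_term_add_term_neg]
  push_cast
  ring

-- `∑_{n ∈ ℤ} e^{-πa²n²} e^{i√π a n z}`
noncomputable def scaledTheta (a : ℝ) (z : ℂ) : ℂ := jacobiTheta₂ (a * z / (2 * √π)) (a ^ 2 * I)

lemma ofReal_sqrt_pi_mul_self : (√π : ℂ) * √π = π := by
  rw [← ofReal_mul, mul_self_sqrt pi_pos.le]

lemma hasSum_exp_mul_cos_scaledTheta (z : ℂ) {a : ℝ} (ha : 0 < a) :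
    HasSum (fun n : ℕ => cexp (-π * a ^ 2 * ((n : ℂ) + 1) ^ 2) *
        Complex.cos (√π * a * ((n : ℂ) + 1) * z))
      ((scaledTheta a z - 1) / 2) := by
  have him : 0 < im ((a : ℂ) ^ 2 * I) := by simpa [← ofReal_pow] using pow_pos ha 2
  refine (hasSum_jacobiTheta₂_cos _ him).congr_fun fun n => ?_
  congr 2
  · linear_combination (-π * (a : ℂ) ^ 2 * ((n : ℂ) + 1) ^ 2) * I_sq
  · rw [← ofReal_sqrt_pi_mul_self]
    field_simp

lemma hasSum_exp_mul_cosh_scaledTheta (z : ℂ) {b : ℝ} (hb : 0 < b) :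
    HasSum (fun n : ℕ => cexp (-π * b ^ 2 * ((n : ℂ) + 1) ^ 2) *
        Complex.cosh (√π * b * ((n : ℂ) + 1) * z))
      ((scaledTheta b (z * I) - 1) / 2) := by
  refine (hasSum_exp_mul_cos_scaledTheta (z * I) hb).congr_fun fun n => ?_
  rw [← cos_mul_I, mul_assoc _ z I]

lemma scaledTheta_eq_of_mul_eq_one {a b : ℝ} (ha : 0 < a) (hab : a * b = 1) (z : ℂ) :
    scaledTheta a z = b * cexp (-z ^ 2 / 4) * scaledTheta b (z * I) := by
  have hab' : (a : ℂ) * b = 1 := by exact_mod_cast hab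
  have ha' : (a : ℂ) ≠ 0 := ofReal_ne_zero.mpr ha.ne'
  have hπ : (√π : ℂ) ≠ 0 := ofReal_ne_zero.mpr (sqrt_pos.mpr pi_pos).ne'
  have hsqrt : (-I * (a ^ 2 * I)) ^ (1 / 2 : ℂ) = (a : ℂ) := by
    rw [show -I * (a ^ 2 * I) = ((a ^ 2 : ℝ) : ℂ) by
        push_cast; linear_combination (-(a : ℂ) ^ 2) * I_sq,
      show (1 / 2 : ℂ) = ((1 / 2 : ℝ) : ℂ) by norm_num, ← ofReal_cpow (sq_nonneg a),
      ← sqrt_eq_rpow, sqrt_sq ha.le]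
  rw [scaledTheta, jacobiTheta₂_functional_equation, hsqrt, scaledTheta,
    ← jacobiTheta₂_neg_left]
  have hba : (b : ℂ) = (a : ℂ)⁻¹ := eq_inv_of_mul_eq_one_right hab'
  congr 2
  · rw [one_div, hba]
  · congr 1
    field_simp
    linear_combination 4 * z ^ 2 * ofReal_sqrt_pi_mul_self
  · rw [hba]
    field_simp
    linear_combination (-z) * I_sq
  · rw [hba]
    field_simp
    linear_combination (-1 : ℂ) * I_sq

theorem general_theta_transformation (z : ℂ) (a b : ℝ) (ha : 0 < a) (hb : 0 < b)
    (hab : a * b = 1) :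
    (Real.sqrt a : ℂ) *
        (Complex.exp (-z ^ 2 / 8) / (2 * (a : ℂ)) -
          Complex.exp (z ^ 2 / 8) *
            ∑' n : ℕ, Complex.exp (-(π : ℂ) * (a : ℂ) ^ 2 * ((n : ℂ) + 1) ^ 2) *
              Complex.cos ((Real.sqrt π : ℂ) * (a : ℂ) * ((n : ℂ) + 1) * z)) =
      (Real.sqrt b : ℂ) *
        (Complex.exp (z ^ 2 / 8) / (2 * (b : ℂ)) -
          Complex.exp (-z ^ 2 / 8) *
            ∑' n : ℕ, Complex.exp (-(π : ℂ) * (b : ℂ) ^ 2 * ((n : ℂ) + 1) ^ 2) *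
              Complex.cosh ((Real.sqrt π : ℂ) * (b : ℂ) * ((n : ℂ) + 1) * z)) := by
  rw [(hasSum_exp_mul_cos_scaledTheta z ha).tsum_eq,
    (hasSum_exp_mul_cosh_scaledTheta z hb).tsum_eq, scaledTheta_eq_of_mul_eq_one ha hab]
  have hsqrt : √a = a * √b := by
    conv_lhs => rw [show a = a ^ 2 * b by rw [sq, mul_assoc, hab, mul_one]]
    rw [sqrt_mul (sq_nonneg a), sqrt_sq ha.le]
  have hba : (b : ℂ) = (a : ℂ)⁻¹ := eq_inv_of_mul_eq_one_right (by exact_mod_cast hab)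
  have hexp : cexp (z ^ 2 / 8) = (cexp (-z ^ 2 / 8))⁻¹ := by
    rw [← Complex.exp_neg, neg_div, neg_neg]
  have hexp4 : cexp (-z ^ 2 / 4) = cexp (-z ^ 2 / 8) ^ 2 := by rw [← Complex.exp_nat_mul]; ring_nf
  have ha' : (a : ℂ) ≠ 0 := ofReal_ne_zero.mpr ha.ne'
  rw [hsqrt, ofReal_mul, hba, hexp, hexp4]
  field_simp
  ring
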